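/- arXiv:1310.7649 — 7 statements merged into one kernel-verified Lean document; each statement's English description precedes it below -/
import Mathlib

section
/- For fixed τ > 0 and 0 < ε < ħω_D, the function τ ↦ ∫_ε^{ħω_D} (1/ξ) tanh(ξ/(2τ)) dξ is strictly decreasing on (0, ∞). -/
open Set MeasureTheory intervalIntegral

namespace Real

theorem strictMono_tanh : StrictMono tanh := fun a b hab => by
  have mem (x : ℝ) : tanh x ∈ Ioo (-1) 1 := ⟨neg_one_lt_tanh x, tanh_lt_one x⟩
  rwa [← strictMonoOn_artanh.lt_iff_lt (mem a) (mem b), artanh_tanh, artanh_tanh]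

theorem continuous_tanh : Continuous tanh := by
  rw [show tanh = fun x => sinh x / cosh x from funext tanh_eq_sinh_div_cosh]
  exact continuous_sinh.div continuous_cosh fun x => (cosh_pos x).ne'

end Real

theorem strictAntiOn_intervalIntegral {f : ℝ → ℝ → ℝ} {s : Set ℝ} {a b : ℝ} (hab : a < b)
    (hf : ∀ τ ∈ s, IntervalIntegrable (f τ) volume a b)
    (hanti : ∀ ξ ∈ Ioo a b, StrictAntiOn (f · ξ) s) :
    StrictAntiOn (fun τ => ∫ ξ in a..b, f τ ξ) s := fun τ₁ h₁ τ₂ h₂ h => by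
  rw [← sub_pos, ← integral_sub (hf τ₁ h₁) (hf τ₂ h₂)]
  exact intervalIntegral_pos_of_pos_on ((hf τ₁ h₁).sub (hf τ₂ h₂))
    (fun ξ hξ => sub_pos.2 (hanti ξ hξ h₁ h₂ h)) hab

theorem strictAntiOn_one_div_mul_tanh_div {ξ : ℝ} (hξ : 0 < ξ) :
    StrictAntiOn (fun τ : ℝ => 1 / ξ * Real.tanh (ξ / (2 * τ))) (Ioi 0) :=
  fun τ₁ h₁ _ _ h => mul_lt_mul_of_pos_left
    (Real.strictMono_tanh (div_lt_div_of_pos_left hξ (by simpa using h₁) (by linarith)))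
    (one_div_pos.2 hξ)

theorem intervalIntegrable_one_div_mul_tanh_div {a b : ℝ} (ha : 0 < a) (hb : 0 < b) (τ : ℝ) :
    IntervalIntegrable (fun ξ : ℝ => 1 / ξ * Real.tanh (ξ / (2 * τ))) volume a b := by
  refine ContinuousOn.intervalIntegrable (ContinuousOn.mul ?_ ?_)
  · exact continuousOn_const.div continuousOn_id fun x hx =>
      ((lt_min ha hb).trans_le hx.1).ne'
  · exact (Real.continuous_tanh.comp (continuous_id.div_const _)).continuousOn

/-- The function τ ↦ ∫_ε^{ħω_D} (1/ξ) tanh(ξ/(2τ)) dξ is strictly decreasing on (0, ∞). -/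
theorem stmt1 (ε ω : ℝ) (hε : 0 < ε) (hεω : ε < ω) :
    StrictAntiOn (fun τ : ℝ => ∫ ξ in ε..ω, (1 / ξ) * Real.tanh (ξ / (2 * τ)))
      (Set.Ioi 0) :=
  strictAntiOn_intervalIntegral hεω
    (fun τ _ => intervalIntegrable_one_div_mul_tanh_div hε (hε.trans hεω) τ)
    (fun _ hξ => strictAntiOn_one_div_mul_tanh_div (hε.trans hξ.1))
end

section
/- The function F(T, Y) = ∫_ε^{ħω_D} (1/√(ξ² + Y)) tanh(√(ξ² + Y)/(2T)) dξ is strictly decreasing in Y ≥ 0 for each fixed T > 0. -/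
/-!
For fixed `ξ > 0` the integrand is `g(√(ξ² + Y))` with `g s = tanh (s / 2T) / s`. Since `tanh` is
strictly concave on `[0, ∞)` and vanishes at `0`, its secant slope `tanh u / u` from the origin is
strictly decreasing, hence so is `g`, and `Y ↦ √(ξ² + Y)` is strictly increasing. The integrands
are continuous on `[ε, ω]`, so the strict pointwise inequality integrates to a strict one.
-/

open Real Set

theorem Real.hasDerivAt_tanh (x : ℝ) : HasDerivAt tanh (1 / cosh x ^ 2) x := by
  have h := (hasDerivAt_sinh x).div (hasDerivAt_cosh x) (cosh_pos x).ne'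
  rw [← sq, ← sq, cosh_sq_sub_sinh_sq] at h
  exact h.congr_of_eventuallyEq (.of_forall tanh_eq_sinh_div_cosh)

@[fun_prop]
theorem Real.continuous_tanh_s2 : Continuous tanh :=
  continuous_iff_continuousAt.2 fun x => (hasDerivAt_tanh x).continuousAt

theorem Real.strictConcaveOn_tanh : StrictConcaveOn ℝ (Ici 0) tanh := by
  refine StrictAntiOn.strictConcaveOn_of_deriv (convex_Ici 0) continuous_tanh_s2.continuousOn ?_
  rw [interior_Ici, funext fun x => (hasDerivAt_tanh x).deriv]
  intro a ha b hb hab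
  have hcosh : cosh a < cosh b := by
    rwa [cosh_lt_cosh, abs_of_pos ha, abs_of_pos hb]
  have := cosh_pos a
  show 1 / cosh b ^ 2 < 1 / cosh a ^ 2
  gcongr

theorem StrictConcaveOn.strictAntiOn_div_of_map_zero {𝕜 : Type*} [Field 𝕜] [LinearOrder 𝕜]
    [IsStrictOrderedRing 𝕜] {f : 𝕜 → 𝕜} (hf : StrictConcaveOn 𝕜 (Ici 0) f) (h0 : f 0 = 0) :
    StrictAntiOn (fun x => f x / x) (Ioi 0) := by
  intro x hx y hy hxy
  simpa [h0] using hf.secant_strict_mono (mem_Ici.2 le_rfl) (mem_Ici.2 (le_of_lt hx))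
    (mem_Ici.2 (le_of_lt hy)) (ne_of_gt hx) (ne_of_gt hy) hxy

theorem Real.strictAntiOn_tanh_div_div {c : ℝ} (hc : 0 < c) :
    StrictAntiOn (fun s => tanh (s / c) / s) (Ioi 0) := by
  intro x hx y hy hxy
  have key := strictConcaveOn_tanh.strictAntiOn_div_of_map_zero tanh_zero
    (div_pos hx hc) (div_pos hy hc) (div_lt_div_of_pos_right hxy hc)
  simp only [div_div_eq_mul_div, mul_div_right_comm _ c] at key
  exact lt_of_mul_lt_mul_right key hc.le

theorem strictAntiOn_one_div_sqrt_mul_tanh {c ξ : ℝ} (hc : 0 < c) (hξ : ξ ≠ 0) :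
    StrictAntiOn (fun Y => 1 / √(ξ ^ 2 + Y) * tanh (√(ξ ^ 2 + Y) / c)) (Ici 0) := by
  have hmono : StrictMonoOn (fun Y => √(ξ ^ 2 + Y)) (Ici 0) := fun Y₁ hY₁ Y₂ _ h =>
    sqrt_lt_sqrt (by positivity [mem_Ici.1 hY₁]) (by linarith)
  have hmaps : MapsTo (fun Y => √(ξ ^ 2 + Y)) (Ici 0) (Ioi 0) := fun Y hY =>
    sqrt_pos.2 (by have := mem_Ici.1 hY; positivity)
  simpa only [one_div_mul_eq_div, Function.comp_def] using
    (strictAntiOn_tanh_div_div hc).comp_strictMonoOn hmono hmaps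

theorem continuousAt_one_div_sqrt_mul_tanh (c : ℝ) {Y ξ : ℝ} (hY : 0 ≤ Y) (hξ : ξ ≠ 0) :
    ContinuousAt (fun ξ => 1 / √(ξ ^ 2 + Y) * tanh (√(ξ ^ 2 + Y) / c)) ξ := by
  have : √(ξ ^ 2 + Y) ≠ 0 := (sqrt_pos.2 (by positivity)).ne'
  fun_prop (disch := assumption)

/-- F(T, Y) = ∫_ε^{ħω_D} (1/√(ξ² + Y)) tanh(√(ξ² + Y)/(2T)) dξ is strictly decreasing
in Y ≥ 0 for each fixed T > 0. -/
theorem stmt2 (ε ω : ℝ) (hε : 0 < ε) (hεω : ε < ω) (T : ℝ) (hT : 0 < T) :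
    StrictAntiOn
      (fun Y : ℝ => ∫ ξ in ε..ω,
        (1 / Real.sqrt (ξ ^ 2 + Y)) * Real.tanh (Real.sqrt (ξ ^ 2 + Y) / (2 * T)))
      (Set.Ici 0) := by
  intro Y₁ hY₁ Y₂ hY₂ hY
  have hξ : ∀ ξ ∈ Icc ε ω, ξ ≠ 0 := fun ξ hξ => (hε.trans_le hξ.1).ne'
  have hcont : ∀ Y ∈ Ici (0 : ℝ), ContinuousOn
      (fun ξ => 1 / √(ξ ^ 2 + Y) * tanh (√(ξ ^ 2 + Y) / (2 * T))) (Icc ε ω) :=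
    fun Y hY ξ hξ' => (continuousAt_one_div_sqrt_mul_tanh _ hY (hξ ξ hξ')).continuousWithinAt
  have hlt : ∀ ξ ∈ Icc ε ω, 1 / √(ξ ^ 2 + Y₂) * tanh (√(ξ ^ 2 + Y₂) / (2 * T)) <
      1 / √(ξ ^ 2 + Y₁) * tanh (√(ξ ^ 2 + Y₁) / (2 * T)) := fun ξ hξ' =>
    strictAntiOn_one_div_sqrt_mul_tanh (by positivity) (hξ ξ hξ') hY₁ hY₂ hY
  exact intervalIntegral.integral_lt_integral_of_continuousOn_of_le_of_exists_lt hεω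
    (hcont Y₂ hY₂) (hcont Y₁ hY₁) (fun ξ hξ' => (hlt ξ (Ioc_subset_Icc_self hξ')).le)
    ⟨ε, left_mem_Icc.2 hεω.le, hlt ε (left_mem_Icc.2 hεω.le)⟩
end

section
/- At T = 0 (i.e., taking tanh factor equal to 1), the equation 1 = U₁ ∫_ε^{ħω_D} dξ/√(ξ² + Y) has the unique nonnegative solution Y = Δ², where Δ = √((ħω_D − ε e^{1/U₁})(ħω_D − ε e^{−1/U₁}))/sinh(1/U₁), provided ħω_D > ε e^{1/U₁}. -/
/-!
For `Y > 0` the integral is `arsinh (ω / √Y) - arsinh (ε / √Y)`, so with `s = 1 / U₁` the gap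
equation says `arsinh (ω / √Y) = s + arsinh (ε / √Y)`. Taking `sinh` turns this into
`ω = sinh s * √(ε² + Y) + ε * cosh s`, which, since `ω - ε cosh s > 0`, is equivalent to
`(ε² + Y) sinh² s = (ω - ε cosh s)²`, i.e. `Y sinh² s = (ω - ε eˢ)(ω - ε e⁻ˢ)`.
At `Y = 0` the equation would force `ω = ε eˢ`, excluded by hypothesis.
-/

open Real

lemma integral_one_div_sqrt_sq_add {Y : ℝ} (hY : 0 < Y) (a b : ℝ) :
    ∫ ξ in a..b, 1 / √(ξ ^ 2 + Y) = arsinh (b / √Y) - arsinh (a / √Y) := by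
  have hderiv (x : ℝ) :
      HasDerivAt (fun ξ => arsinh (ξ / √Y)) (1 / √(x ^ 2 + Y)) x := by
    refine ((hasDerivAt_arsinh _).comp x ((hasDerivAt_id x).div_const √Y)).congr_deriv ?_
    have hsqrt : √(1 + (x / √Y) ^ 2) = √(x ^ 2 + Y) / √Y := by
      rw [div_pow, sq_sqrt hY.le, ← sqrt_div' _ hY.le, add_div, div_self hY.ne', add_comm]
    have : 0 < √(x ^ 2 + Y) := sqrt_pos.mpr (by positivity)
    rw [id, hsqrt]
    field_simp
  have hcont : Continuous fun x : ℝ => 1 / √(x ^ 2 + Y) :=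
    continuous_const.div (by fun_prop) fun x => (sqrt_pos.mpr (by positivity)).ne'
  exact intervalIntegral.integral_eq_sub_of_hasDerivAt (fun x _ => hderiv x)
    (hcont.intervalIntegrable a b)

lemma integral_one_div_sqrt_sq {a b : ℝ} (ha : 0 < a) (hb : 0 < b) :
    ∫ ξ in a..b, 1 / √(ξ ^ 2) = log (b / a) := by
  have h0 : (0 : ℝ) ∉ Set.uIcc a b := Set.notMem_uIcc_of_lt ha hb
  rw [← integral_one_div h0]
  refine intervalIntegral.integral_congr fun x hx => ?_
  have hx : 0 < x := lt_of_lt_of_le (lt_min ha hb) hx.1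
  simp only [sqrt_sq hx.le]

lemma arsinh_div_eq_add_arsinh_div_iff {r : ℝ} (hr : 0 < r) (s ε ω : ℝ) :
    arsinh (ω / r) = s + arsinh (ε / r) ↔ ω = sinh s * √(ε ^ 2 + r ^ 2) + ε * cosh s := by
  have hsqrt : √(1 + (ε / r) ^ 2) = √(ε ^ 2 + r ^ 2) / r := by
    rw [← sqrt_sq hr.le, ← sqrt_div' _ (sq_nonneg r), sqrt_sq hr.le, div_pow,
      add_div, div_self (by positivity), add_comm]
  rw [← sinh_injective.eq_iff, sinh_arsinh, sinh_add, sinh_arsinh, cosh_arsinh, hsqrt]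
  field_simp

lemma sub_mul_cosh_sq_sub_sq_mul_sinh_sq (s ε ω : ℝ) :
    (ω - ε * cosh s) ^ 2 - ε ^ 2 * sinh s ^ 2 = (ω - ε * exp s) * (ω - ε * exp (-s)) := by
  have hsum : exp s + exp (-s) = 2 * cosh s := by rw [cosh_eq]; ring
  have hprod : exp s * exp (-s) = 1 := by rw [← exp_add, add_neg_cancel, exp_zero]
  linear_combination ε ^ 2 * cosh_sq_sub_sinh_sq s - ε ^ 2 * hprod + ω * ε * hsum

lemma eq_sinh_mul_sqrt_add_iff {s ε ω Y : ℝ} (hs : 0 < s) (hY : 0 ≤ ε ^ 2 + Y)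
    (hω : ε * cosh s ≤ ω) :
    ω = sinh s * √(ε ^ 2 + Y) + ε * cosh s ↔
      Y = (ω - ε * exp s) * (ω - ε * exp (-s)) / sinh s ^ 2 := by
  have hsinh : 0 < sinh s := sinh_pos_iff.mpr hs
  rw [← sub_mul_cosh_sq_sub_sq_mul_sinh_sq,
    eq_div_iff (by positivity), eq_sub_iff_add_eq, ← add_mul, add_comm Y]
  calc ω = sinh s * √(ε ^ 2 + Y) + ε * cosh s
      ↔ √(ε ^ 2 + Y) = (ω - ε * cosh s) / sinh s := by
        rw [eq_div_iff hsinh.ne']; constructor <;> intro h <;> linarith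
    _ ↔ ε ^ 2 + Y = ((ω - ε * cosh s) / sinh s) ^ 2 :=
        sqrt_eq_iff_eq_sq hY (div_nonneg (sub_nonneg.mpr hω) hsinh.le)
    _ ↔ (ε ^ 2 + Y) * sinh s ^ 2 = (ω - ε * cosh s) ^ 2 := by
        rw [div_pow, eq_div_iff (by positivity)]

lemma one_eq_mul_integral_iff {U ε ω Y : ℝ} (hU : 0 < U) (hε : 0 ≤ ε)
    (hω : ε * exp (1 / U) ≤ ω) (hY : 0 < Y) :
    1 = U * ∫ ξ in ε..ω, 1 / √(ξ ^ 2 + Y) ↔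
      Y = (ω - ε * exp (1 / U)) * (ω - ε * exp (-(1 / U))) / sinh (1 / U) ^ 2 := by
  have hs : 0 < 1 / U := by positivity
  have hcosh : ε * cosh (1 / U) ≤ ω := by
    refine le_trans (mul_le_mul_of_nonneg_left ?_ hε) hω
    rw [cosh_eq]
    linarith [exp_le_exp.mpr (neg_le_self hs.le)]
  have hsqrt : √Y ^ 2 = Y := sq_sqrt hY.le
  rw [← eq_sinh_mul_sqrt_add_iff hs (by positivity) hcosh, ← hsqrt,
    ← arsinh_div_eq_add_arsinh_div_iff (sqrt_pos.mpr hY), hsqrt,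
    integral_one_div_sqrt_sq_add hY, ← sub_eq_iff_eq_add, eq_div_iff hU.ne', mul_comm _ U, eq_comm]

theorem stmt4_general (U₁ ε ω : ℝ) (hU : 0 < U₁) (hε : 0 < ε)
    (hω : ω > ε * Real.exp (1 / U₁)) :
    ∀ Y : ℝ, (0 ≤ Y ∧ 1 = U₁ * ∫ ξ in ε..ω, 1 / Real.sqrt (ξ ^ 2 + Y)) ↔
      Y = (Real.sqrt ((ω - ε * Real.exp (1 / U₁)) * (ω - ε * Real.exp (-(1 / U₁)))) /
            Real.sinh (1 / U₁)) ^ 2 := by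
  intro Y
  have hs : 0 < 1 / U₁ := by positivity
  have hexp : ε * exp (-(1 / U₁)) < ε * exp (1 / U₁) :=
    mul_lt_mul_of_pos_left (exp_lt_exp.mpr (neg_lt_self hs)) hε
  have hΔ : 0 < (ω - ε * exp (1 / U₁)) * (ω - ε * exp (-(1 / U₁))) / sinh (1 / U₁) ^ 2 :=
    div_pos (mul_pos (by linarith) (by linarith)) (pow_pos (sinh_pos_iff.mpr hs) 2)
  rw [div_pow, sq_sqrt (mul_pos (by linarith) (by linarith)).le]
  rcases lt_trichotomy Y 0 with hY | rfl | hY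
  · exact iff_of_false (fun h => hY.not_ge h.1) (by intro h; linarith)
  · refine iff_of_false (fun ⟨_, h⟩ => ?_) hΔ.ne
    have hω₀ : 0 < ω := lt_trans (by positivity) hω
    simp only [add_zero] at h
    rw [integral_one_div_sqrt_sq hε hω₀, eq_comm, mul_comm, ← eq_div_iff hU.ne', ← log_exp (1 / U₁),
      log_injOn_pos.eq_iff (div_pos hω₀ hε) (exp_pos _), div_eq_iff hε.ne'] at h
    linarith
  · rw [and_iff_right hY.le]
    exact one_eq_mul_integral_iff hU hε.le hω.le hY

/-- At T = 0, the equation 1 = U₁ ∫_ε^{ħω_D} dξ/√(ξ² + Y) has the unique nonnegative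
solution Y = Δ², where Δ = √((ħω_D − ε e^{1/U₁})(ħω_D − ε e^{−1/U₁}))/sinh(1/U₁),
provided ħω_D > ε e^{1/U₁}. -/
theorem stmt4 (U₁ ε ω : ℝ) (hU : 0 < U₁) (hε : 0 < ε) (hεω : ε < ω)
    (hω : ω > ε * Real.exp (1 / U₁)) :
    ∀ Y : ℝ, (0 ≤ Y ∧ 1 = U₁ * ∫ ξ in ε..ω, 1 / Real.sqrt (ξ ^ 2 + Y)) ↔
      Y = (Real.sqrt ((ω - ε * Real.exp (1 / U₁)) * (ω - ε * Real.exp (-(1 / U₁)))) /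
            Real.sinh (1 / U₁)) ^ 2 :=
  stmt4_general U₁ ε ω hU hε hω
end

section
/- At T = 0, if 0 < U₁ < U₂ and ħω_D > ε e^{1/U₁}, then Δ₁(0) < Δ₂(0), where Δ_k(0) = √((ħω_D − ε e^{1/U_k})(ħω_D − ε e^{−1/U_k}))/sinh(1/U_k). -/
/-!
Write `x = 1/U`. The radicand `(ω - ε eˣ)(ω - ε e⁻ˣ) = ω² + ε² - 2εω cosh x` is positive and
strictly decreasing in `x > 0`, while `sinh x` is positive and strictly increasing, so the gap
`√(radicand) / sinh x` strictly decreases in `x`, i.e. strictly increases in `U`.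
-/

open Real

noncomputable def zeroTempGap (ε ω x : ℝ) : ℝ :=
  √((ω - ε * exp x) * (ω - ε * exp (-x))) / sinh x

lemma sub_mul_exp_mul_sub_mul_exp_neg (ε ω x : ℝ) :
    (ω - ε * exp x) * (ω - ε * exp (-x)) = ω ^ 2 + ε ^ 2 - 2 * ε * ω * cosh x := by
  rw [cosh_eq, exp_neg]
  field_simp
  ring

lemma sub_mul_exp_mul_sub_mul_exp_neg_pos {ε ω x : ℝ} (hε : 0 < ε) (hx : 0 ≤ x)
    (hω : ε * exp x < ω) : 0 < (ω - ε * exp x) * (ω - ε * exp (-x)) := by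
  have hexp : exp (-x) ≤ exp x := exp_le_exp.2 (by linarith)
  have : ε * exp (-x) ≤ ε * exp x := mul_le_mul_of_nonneg_left hexp hε.le
  exact mul_pos (by linarith) (by linarith)

lemma zeroTempGap_lt_of_lt {ε ω x y : ℝ} (hε : 0 < ε) (hy : 0 < y) (hyx : y < x)
    (hω : ε * exp x < ω) : zeroTempGap ε ω x < zeroTempGap ε ω y := by
  have hωy : ε * exp y < ω :=
    lt_of_le_of_lt (mul_le_mul_of_nonneg_left (exp_le_exp.2 hyx.le) hε.le) hω
  have hεω : 0 < 2 * ε * ω := by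
    have : 0 < ω := lt_trans (by positivity) hω
    positivity
  have hcosh : cosh y < cosh x := by
    rw [cosh_lt_cosh, abs_of_pos hy, abs_of_pos (hy.trans hyx)]
    exact hyx
  have hradicand :
      (ω - ε * exp x) * (ω - ε * exp (-x)) < (ω - ε * exp y) * (ω - ε * exp (-y)) := by
    rw [sub_mul_exp_mul_sub_mul_exp_neg, sub_mul_exp_mul_sub_mul_exp_neg]
    nlinarith
  exact div_lt_div₀
    (sqrt_lt_sqrt (sub_mul_exp_mul_sub_mul_exp_neg_pos hε (hy.trans hyx).le hω).le hradicand)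
    (sinh_lt_sinh.2 hyx).le (sqrt_nonneg _) (sinh_pos_iff.2 hy)

theorem stmt10_general (U₁ U₂ ε ω : ℝ) (hε : 0 < ε)
    (hU₁ : 0 < U₁) (hU : U₁ < U₂) (hω : ω > ε * Real.exp (1 / U₁)) :
    Real.sqrt ((ω - ε * Real.exp (1 / U₁)) * (ω - ε * Real.exp (-(1 / U₁)))) /
        Real.sinh (1 / U₁) <
      Real.sqrt ((ω - ε * Real.exp (1 / U₂)) * (ω - ε * Real.exp (-(1 / U₂)))) /
        Real.sinh (1 / U₂) :=
  zeroTempGap_lt_of_lt hε (one_div_pos.2 (hU₁.trans hU)) (one_div_lt_one_div_of_lt hU₁ hU) hω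

/-- At T = 0, if 0 < U₁ < U₂ and ħω_D > ε e^{1/U₁}, then Δ₁(0) < Δ₂(0). -/
theorem stmt10 (U₁ U₂ ε ω : ℝ) (hε : 0 < ε) (hεω : ε < ω)
    (hU₁ : 0 < U₁) (hU : U₁ < U₂) (hω : ω > ε * Real.exp (1 / U₁)) :
    Real.sqrt ((ω - ε * Real.exp (1 / U₁)) * (ω - ε * Real.exp (-(1 / U₁)))) /
        Real.sinh (1 / U₁) <
      Real.sqrt ((ω - ε * Real.exp (1 / U₂)) * (ω - ε * Real.exp (-(1 / U₂)))) /
        Real.sinh (1 / U₂) :=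
  stmt10_general U₁ U₂ ε ω hε hU₁ hU hω
end

section
/- For fixed T > 0 and ξ > 0, the map s ↦ (s/√(ξ² + s²)) tanh(√(ξ² + s²)/(2T)) is monotone increasing in s on [0, ∞). -/
lemma tanh_mono_aux {a b : ℝ} (hab : a ≤ b) : Real.tanh a ≤ Real.tanh b := by
  rw [Real.tanh_eq_sinh_div_cosh, Real.tanh_eq_sinh_div_cosh,
    div_le_div_iff₀ (Real.cosh_pos a) (Real.cosh_pos b)]
  have h : 0 ≤ Real.sinh (b - a) := by simpa using Real.sinh_le_sinh.2 (show (0:ℝ) ≤ b - a by linarith)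
  rw [Real.sinh_sub] at h
  linarith

/-- For fixed T > 0 and ξ > 0, the map s ↦ (s/√(ξ² + s²)) tanh(√(ξ² + s²)/(2T))
is monotone increasing on [0, ∞). -/
theorem stmt11 (T ξ : ℝ) (hT : 0 < T) (hξ : 0 < ξ) :
    MonotoneOn
      (fun s : ℝ => (s / Real.sqrt (ξ ^ 2 + s ^ 2)) *
        Real.tanh (Real.sqrt (ξ ^ 2 + s ^ 2) / (2 * T)))
      (Set.Ici 0) := by
  intro a ha b hb hab
  simp only [Set.mem_Ici] at ha hb
  have hpa : (0:ℝ) < ξ ^ 2 + a ^ 2 := by positivity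
  have hpb : (0:ℝ) < ξ ^ 2 + b ^ 2 := by positivity
  have hsa : 0 < Real.sqrt (ξ ^ 2 + a ^ 2) := Real.sqrt_pos.2 hpa
  have hsb : 0 < Real.sqrt (ξ ^ 2 + b ^ 2) := Real.sqrt_pos.2 hpb
  have hsle : Real.sqrt (ξ ^ 2 + a ^ 2) ≤ Real.sqrt (ξ ^ 2 + b ^ 2) :=
    Real.sqrt_le_sqrt (by nlinarith)
  have hg : a / Real.sqrt (ξ ^ 2 + a ^ 2) ≤ b / Real.sqrt (ξ ^ 2 + b ^ 2) := by
    rw [div_le_div_iff₀ hsa hsb]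
    have h1 : (a * Real.sqrt (ξ ^ 2 + b ^ 2)) ^ 2 ≤ (b * Real.sqrt (ξ ^ 2 + a ^ 2)) ^ 2 := by
      rw [mul_pow, mul_pow, Real.sq_sqrt hpa.le, Real.sq_sqrt hpb.le]
      nlinarith [mul_le_mul hab hab ha hb, sq_nonneg ξ]
    have h2 : 0 ≤ b * Real.sqrt (ξ ^ 2 + a ^ 2) := by positivity
    nlinarith [h1, h2, mul_nonneg ha hsb.le]
  have hk : Real.tanh (Real.sqrt (ξ ^ 2 + a ^ 2) / (2 * T)) ≤
      Real.tanh (Real.sqrt (ξ ^ 2 + b ^ 2) / (2 * T)) :=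
    tanh_mono_aux (by apply div_le_div_of_nonneg_right hsle ?_ |>.trans_eq rfl <;> positivity)
  have hkn : 0 ≤ Real.tanh (Real.sqrt (ξ ^ 2 + a ^ 2) / (2 * T)) := by
    have := tanh_mono_aux (show (0:ℝ) ≤ Real.sqrt (ξ ^ 2 + a ^ 2) / (2 * T) by positivity)
    simpa [Real.tanh_zero] using this
  have hgn : 0 ≤ a / Real.sqrt (ξ ^ 2 + a ^ 2) := by positivity
  have hgn' : 0 ≤ b / Real.sqrt (ξ ^ 2 + b ^ 2) := by positivity
  calc a / Real.sqrt (ξ ^ 2 + a ^ 2) * Real.tanh (Real.sqrt (ξ ^ 2 + a ^ 2) / (2 * T))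
      ≤ b / Real.sqrt (ξ ^ 2 + b ^ 2) * Real.tanh (Real.sqrt (ξ ^ 2 + a ^ 2) / (2 * T)) :=
        mul_le_mul_of_nonneg_right hg hkn
    _ ≤ b / Real.sqrt (ξ ^ 2 + b ^ 2) * Real.tanh (Real.sqrt (ξ ^ 2 + b ^ 2) / (2 * T)) :=
        mul_le_mul_of_nonneg_left hk hgn'
end

section
/- Under the hypotheses U continuous with 0 < U₁ ≤ U ≤ U₂ on [ε, ħω_D]² and fixed T ∈ [0, τ₂], the operator A : V_T → V_T defined by (Au)(x) = ∫_ε^{ħω_D} U(x,ξ)(u(ξ)/√(ξ²+u(ξ)²)) tanh(√(ξ²+u(ξ)²)/(2T)) dξ is continuous and maps V_T into a uniformly bounded, equicontinuous family; hence A is a compact operator on V_T. -/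
/-!
`A` factors as the Nemytskii operator `u ↦ (ξ ↦ u(ξ) / E · tanh(E / 2T))`, `E = √(ξ² + u(ξ)²)`,
followed by the linear integral operator `w ↦ ∫ U(·, ξ) w(ξ) dξ`. The first is continuous on
`C[ε, ħω_D]` because its integrand is jointly continuous for `ξ ≥ ε > 0`, and it takes values of
sup-norm at most `1`; the second is Lipschitz because `U` is bounded on the compact square. So `A`
is continuous, its values are bounded by `max |U| · (ħω_D - ε)`, and uniform continuity of `U`
in its first variable makes them equicontinuous, so Arzelà–Ascoli applies.
-/

/-- The tanh factor tanh(r/(2T)), interpreted as 1 at T = 0. -/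
noncomputable def tanhFac (T r : ℝ) : ℝ :=
  if T = 0 then 1 else Real.tanh (r / (2 * T))

open Set Function MeasureTheory

theorem Real.continuous_tanh_s13 : Continuous Real.tanh := by
  simp only [funext Real.tanh_eq_sinh_div_cosh]
  exact Real.continuous_sinh.div Real.continuous_cosh fun x => (Real.cosh_pos x).ne'

theorem continuous_tanhFac (T : ℝ) : Continuous (tanhFac T) := by
  unfold tanhFac
  split_ifs
  · exact continuous_const
  · exact Real.continuous_tanh_s13.comp (continuous_id.div_const _)

theorem abs_tanhFac_le_one (T r : ℝ) : |tanhFac T r| ≤ 1 := by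
  unfold tanhFac
  split_ifs
  · simp
  · exact (Real.abs_tanh_lt_one _).le

/-- `Δ / E · tanh(E / 2T)` with `E = √(ξ² + Δ²)`, the integrand of the gap equation. -/
noncomputable def gapFactor (T ξ t : ℝ) : ℝ :=
  t / √(ξ ^ 2 + t ^ 2) * tanhFac T √(ξ ^ 2 + t ^ 2)

theorem abs_gapFactor_le_one (T ξ t : ℝ) : |gapFactor T ξ t| ≤ 1 := by
  rw [gapFactor, abs_mul, abs_div, abs_of_nonneg (Real.sqrt_nonneg _)]
  refine mul_le_one₀ (div_le_one_of_le₀ ?_ (Real.sqrt_nonneg _)) (abs_nonneg _)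
    (abs_tanhFac_le_one _ _)
  exact Real.abs_le_sqrt (by nlinarith)

theorem continuousOn_gapFactor (T : ℝ) :
    ContinuousOn (uncurry (gapFactor T)) {p | p.1 ≠ 0} := by
  have hsqrt : Continuous fun p : ℝ × ℝ => √(p.1 ^ 2 + p.2 ^ 2) := by fun_prop
  refine (continuous_snd.continuousOn.div hsqrt.continuousOn fun p hp => ?_).mul
    ((continuous_tanhFac T).comp hsqrt).continuousOn
  exact (Real.sqrt_pos.2 (by have : p.1 ≠ 0 := hp; positivity)).ne'

namespace ContinuousMap

variable {X Y Z : Type*} [TopologicalSpace X] [LocallyCompactSpace X] [TopologicalSpace Y]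
  [TopologicalSpace Z]

def nemytskii (G : C(X × Y, Z)) : C(C(X, Y), C(X, Z)) :=
  (G.comp ⟨fun p : C(X, Y) × X => (p.2, p.1 p.2), by fun_prop⟩).curry

@[simp]
theorem nemytskii_apply (G : C(X × Y, Z)) (u : C(X, Y)) (x : X) :
    nemytskii G u x = G (x, u x) :=
  rfl

end ContinuousMap

theorem ContinuousMap.isCompact_closure_of_equicontinuous {X β : Type*} [TopologicalSpace X]
    [CompactSpace X] [MetricSpace β] {S : Set C(X, β)} {s : Set β} (hs : IsCompact s)
    (hS : ∀ f ∈ S, ∀ x, f x ∈ s) (hSeq : Equicontinuous ((↑) : S → X → β)) :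
    IsCompact (closure S) := by
  set e := (isometryEquivBoundedOfCompact X β).toHomeomorph
  rw [← e.isCompact_image, e.image_closure]
  refine BoundedContinuousFunction.arzela_ascoli s hs _ ?_ ?_
  · rintro _ x ⟨f, hf, rfl⟩
    exact hS f hf x
  · have hrange : (range fun g : e '' S => ⇑(g : BoundedContinuousFunction X β)) =
        range fun f : S => ⇑(f : C(X, β)) := by
      ext
      constructor
      · rintro ⟨⟨_, f, hf, rfl⟩, rfl⟩
        exact ⟨⟨f, hf⟩, rfl⟩
      · rintro ⟨⟨f, hf⟩, rfl⟩
        exact ⟨⟨_, f, hf, rfl⟩, rfl⟩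
    rw [equicontinuous_iff_range, hrange, ← equicontinuous_iff_range]
    exact hSeq

theorem continuous_of_dist_le_mul {Y Z W : Type*} [TopologicalSpace Y] [PseudoMetricSpace Z]
    [PseudoMetricSpace W] {f : Y → Z} {g : Y → W} (hg : Continuous g) (C : ℝ)
    (h : ∀ y y', dist (f y) (f y') ≤ C * dist (g y) (g y')) : Continuous f :=
  continuous_iff_continuousAt.2 fun y => tendsto_iff_dist_tendsto_zero.2 <|
    squeeze_zero (fun _ => dist_nonneg) (fun y' => h y' y) <| by
      simpa using ((hg.tendsto y).dist (tendsto_const_nhds (x := g y))).const_mul C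

section KernelIntegral

variable {a b : ℝ} (hab : a ≤ b)

noncomputable def kernelIntegral (K : ℝ → ℝ → ℝ) (w : C(Icc a b, ℝ)) (x : ℝ) : ℝ :=
  ∫ ξ in a..b, K x ξ * IccExtend hab w ξ

theorem abs_integral_mul_IccExtend_le {k : ℝ → ℝ} {M : ℝ} (hk : ∀ ξ ∈ Icc a b, |k ξ| ≤ M)
    (w : C(Icc a b, ℝ)) : |∫ ξ in a..b, k ξ * IccExtend hab w ξ| ≤ M * ‖w‖ * (b - a) := by
  have h := intervalIntegral.norm_integral_le_of_norm_le_const (a := a) (b := b)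
    (C := M * ‖w‖) (f := fun ξ => k ξ * IccExtend hab w ξ) fun ξ hξ => by
      rw [uIoc_of_le hab] at hξ
      have hkξ := hk ξ (Ioc_subset_Icc_self hξ)
      rw [norm_mul]
      exact mul_le_mul hkξ (w.norm_coe_le_norm _) (norm_nonneg _)
        ((abs_nonneg _).trans hkξ)
  rwa [Real.norm_eq_abs, abs_of_nonneg (sub_nonneg.2 hab)] at h

theorem intervalIntegrable_mul_IccExtend {k : ℝ → ℝ} (hk : ContinuousOn k (Icc a b))
    (w : C(Icc a b, ℝ)) : IntervalIntegrable (fun ξ => k ξ * IccExtend hab w ξ) volume a b :=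
  (hk.mul (continuous_IccExtend_iff.2 w.continuous).continuousOn).intervalIntegrable_of_Icc hab

variable {K : ℝ → ℝ → ℝ} (hK : ContinuousOn (uncurry K) (Icc a b ×ˢ Icc a b))
include hK

theorem kernelIntegral_sub_kernelIntegral {x : ℝ} (hx : x ∈ Icc a b) (w w' : C(Icc a b, ℝ)) :
    kernelIntegral hab K w x - kernelIntegral hab K w' x =
      ∫ ξ in a..b, K x ξ * IccExtend hab (w - w') ξ := by
  have hKx := hK.uncurry_left x hx
  rw [kernelIntegral, kernelIntegral, ← intervalIntegral.integral_sub
    (intervalIntegrable_mul_IccExtend hab hKx w) (intervalIntegrable_mul_IccExtend hab hKx w')]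
  simp only [IccExtend_apply, ContinuousMap.sub_apply, mul_sub]

theorem kernelIntegral_sub_kernelIntegral_left {x x' : ℝ} (hx : x ∈ Icc a b)
    (hx' : x' ∈ Icc a b) (w : C(Icc a b, ℝ)) :
    kernelIntegral hab K w x - kernelIntegral hab K w x' =
      ∫ ξ in a..b, (K x ξ - K x' ξ) * IccExtend hab w ξ := by
  rw [kernelIntegral, kernelIntegral, ← intervalIntegral.integral_sub
    (intervalIntegrable_mul_IccExtend hab (hK.uncurry_left x hx) w)
    (intervalIntegrable_mul_IccExtend hab (hK.uncurry_left x' hx') w)]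
  simp only [sub_mul]

end KernelIntegral

section HammersteinOperator

variable {a b : ℝ} (hab : a ≤ b) {K : ℝ → ℝ → ℝ}
  (hK : ContinuousOn (uncurry K) (Icc a b ×ˢ Icc a b))
  {Y : Type*} {N A : Y → C(Icc a b, ℝ)} (hA : ∀ y x, A y x = kernelIntegral hab K (N y) x)
include hK hA

theorem continuous_of_eq_kernelIntegral [TopologicalSpace Y] (hN : Continuous N) :
    Continuous A := by
  obtain ⟨M, hM⟩ := (isCompact_Icc.prod isCompact_Icc).exists_bound_of_continuousOn hK
  have hM₀ : 0 ≤ M := (norm_nonneg _).trans (hM (a, a) ⟨left_mem_Icc.2 hab, left_mem_Icc.2 hab⟩)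
  refine continuous_of_dist_le_mul hN (M * (b - a)) fun y y' => ?_
  rw [ContinuousMap.dist_le (by have := sub_nonneg.2 hab; positivity)]
  intro x
  rw [Real.dist_eq, hA, hA, kernelIntegral_sub_kernelIntegral hab hK x.2, dist_eq_norm,
    mul_right_comm]
  exact abs_integral_mul_IccExtend_le hab (fun ξ hξ => hM (x, ξ) ⟨x.2, hξ⟩) _

theorem isCompact_closure_range_of_eq_kernelIntegral {B : ℝ} (hNB : ∀ y, ‖N y‖ ≤ B) :
    IsCompact (closure (range A)) := by
  obtain ⟨M, hM⟩ := (isCompact_Icc.prod isCompact_Icc).exists_bound_of_continuousOn hK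
  refine ContinuousMap.isCompact_closure_of_equicontinuous
    (isCompact_closedBall (0 : ℝ) (M * B * (b - a))) ?_ ?_
  · rintro _ ⟨y, rfl⟩ x
    rw [mem_closedBall_zero_iff, hA, Real.norm_eq_abs]
    refine (abs_integral_mul_IccExtend_le hab (fun ξ hξ => hM (x, ξ) ⟨x.2, hξ⟩) _).trans ?_
    have hM₀ : 0 ≤ M := (norm_nonneg _).trans (hM (x, x) ⟨x.2, x.2⟩)
    gcongr
    exact hNB y
  refine (Metric.uniformEquicontinuous_iff.2 fun η hη => ?_).equicontinuous
  set C := |B| * (b - a) + 1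
  have hC : 0 < C := by have := sub_nonneg.2 hab; positivity
  obtain ⟨δ, hδ, hKδ⟩ := Metric.uniformContinuousOn_iff.1
    ((isCompact_Icc.prod isCompact_Icc).uniformContinuousOn_of_continuous hK) (η / C)
    (div_pos hη hC)
  refine ⟨δ, hδ, fun x x' hxx' ⟨_, y, rfl⟩ => ?_⟩
  have hK_sub : ∀ ξ ∈ Icc a b, |K x ξ - K x' ξ| ≤ η / C := fun ξ hξ =>
    (hKδ (x, ξ) ⟨x.2, hξ⟩ (x', ξ) ⟨x'.2, hξ⟩
      (by rwa [Prod.dist_eq, dist_self, max_eq_left dist_nonneg])).le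
  rw [Real.dist_eq, hA, hA, kernelIntegral_sub_kernelIntegral_left hab hK x.2 x'.2]
  calc _ ≤ η / C * ‖N y‖ * (b - a) := abs_integral_mul_IccExtend_le hab hK_sub _
    _ ≤ η / C * (|B| * (b - a)) := by
        rw [mul_assoc]
        gcongr
        exact (hNB y).trans (le_abs_self B)
    _ < η := by
        rw [div_mul_eq_mul_div, div_lt_iff₀ hC]
        exact mul_lt_mul_of_pos_left (lt_add_one _) hη

end HammersteinOperator

/-- The operator A : V_T → V_T is continuous and its image is relatively compact in the
sup-norm topology; hence A is a compact operator on V_T. -/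
theorem stmt13 (ε ω : ℝ) (hε : 0 < ε) (hεω : ε < ω)
    (U : ℝ → ℝ → ℝ)
    (hUcont : ContinuousOn (fun p : ℝ × ℝ => U p.1 p.2) (Set.Icc ε ω ×ˢ Set.Icc ε ω))
    (T Δ₁ Δ₂ : ℝ)
    (A : C(Set.Icc ε ω, ℝ) → C(Set.Icc ε ω, ℝ))
    (hA : ∀ u : C(Set.Icc ε ω, ℝ), ∀ x : Set.Icc ε ω,
      A u x = ∫ ξ in ε..ω,
        U x ξ * (u ⟨max ε (min ξ ω), by
            constructor <;> simp [le_max_iff, le_min_iff, hεω.le, le_refl]⟩ /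
            Real.sqrt (ξ ^ 2 + (u ⟨max ε (min ξ ω), by
              constructor <;> simp [le_max_iff, le_min_iff, hεω.le, le_refl]⟩) ^ 2)) *
          tanhFac T (Real.sqrt (ξ ^ 2 + (u ⟨max ε (min ξ ω), by
            constructor <;> simp [le_max_iff, le_min_iff, hεω.le, le_refl]⟩) ^ 2))) :
    ContinuousOn A {u : C(Set.Icc ε ω, ℝ) | ∀ x, Δ₁ ≤ u x ∧ u x ≤ Δ₂} ∧
    IsCompact (closure
      (A '' {u : C(Set.Icc ε ω, ℝ) | ∀ x, Δ₁ ≤ u x ∧ u x ≤ Δ₂})) := by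
  let G : C(Icc ε ω × ℝ, ℝ) := ⟨fun p => gapFactor T p.1 p.2,
    (continuousOn_gapFactor T).comp_continuous (f := fun p : Icc ε ω × ℝ => ((p.1 : ℝ), p.2))
      (by fun_prop) fun p => (hε.trans_le p.1.2.1).ne'⟩
  have hA' : ∀ u x, A u x = kernelIntegral hεω.le U (ContinuousMap.nemytskii G u) x := by
    intro u x
    rw [hA, kernelIntegral]
    refine intervalIntegral.integral_congr fun ξ hξ => ?_
    rw [uIcc_of_le hεω.le] at hξ
    simp [IccExtend_of_mem _ _ hξ, hξ.1, hξ.2, G, gapFactor, mul_assoc]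
  have hG_le_one : ∀ u, ‖ContinuousMap.nemytskii G u‖ ≤ 1 := fun u =>
    (ContinuousMap.norm_le _ zero_le_one).2 fun ξ => abs_gapFactor_le_one _ _ _
  exact ⟨(continuous_of_eq_kernelIntegral hεω.le hUcont hA'
    (ContinuousMap.nemytskii G).continuous).continuousOn,
    (isCompact_closure_range_of_eq_kernelIntegral hεω.le hUcont hA' hG_le_one).of_isClosed_subset
      isClosed_closure (closure_mono (image_subset_range _ _))⟩
end

section
/- Define T_c = inf{T > 0 : u₀(T, x) = 0 for all x ∈ [ε, ħω_D]}, where u₀(T, ·) ∈ V_T is the solution of the BCS gap equation at temperature T. Then τ₁ ≤ T_c ≤ τ₂. -/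
open Set

theorem csInf_mem_Icc_of_Ioi_subset {α : Type*} [ConditionallyCompleteLattice α]
    [NoMaxOrder α] [DenselyOrdered α] {S : Set α} {a b : α}
    (ha : a ∈ lowerBounds S) (hb : Ioi b ⊆ S) : sInf S ∈ Icc a b :=
  ⟨le_csInf (nonempty_Ioi.mono hb) ha,
    csInf_Ioi (a := b) ▸ csInf_le_csInf ⟨a, ha⟩ nonempty_Ioi hb⟩

theorem stmt17_general (ε ω τ₁ τ₂ : ℝ) (hεω : ε < ω)
    (hτ₁pos : 0 < τ₁) (hτ₁₂ : τ₁ ≤ τ₂)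
    (Δ₁ Δ₂ : ℝ → ℝ) (u₀ : ℝ → ℝ → ℝ)
    (hΔ₁nonneg : ∀ T, 0 ≤ Δ₁ T)
    (hΔ₁zero : ∀ T, Δ₁ T = 0 ↔ τ₁ ≤ T)
    (hbd : ∀ T, 0 ≤ T → T ≤ τ₂ → ∀ x ∈ Set.Icc ε ω,
      Δ₁ T ≤ u₀ T x ∧ u₀ T x ≤ Δ₂ T)
    (hzero : ∀ T, τ₂ < T → ∀ x ∈ Set.Icc ε ω, u₀ T x = 0) :
    τ₁ ≤ sInf {T : ℝ | 0 < T ∧ ∀ x ∈ Set.Icc ε ω, u₀ T x = 0} ∧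
    sInf {T : ℝ | 0 < T ∧ ∀ x ∈ Set.Icc ε ω, u₀ T x = 0} ≤ τ₂ := by
  refine csInf_mem_Icc_of_Ioi_subset ?_ fun T hT =>
    ⟨(hτ₁pos.trans_le hτ₁₂).trans hT, hzero T hT⟩
  rintro T ⟨hTpos, hvanish⟩
  by_contra! hT
  have hε : ε ∈ Icc ε ω := left_mem_Icc.2 hεω.le
  -- below τ₁ the gap Δ₁ T is positive, yet it is bounded by u₀ T ε = 0
  have hΔ₁ : Δ₁ T ≤ 0 := hvanish ε hε ▸ (hbd T hTpos.le (hT.le.trans hτ₁₂) ε hε).1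
  exact hT.not_ge ((hΔ₁zero T).1 (le_antisymm hΔ₁ (hΔ₁nonneg T)))

/-- T_c = inf{T > 0 : u₀(T, x) = 0 for all x ∈ [ε, ħω_D]} satisfies τ₁ ≤ T_c ≤ τ₂. -/
theorem stmt17 (ε ω τ₁ τ₂ : ℝ) (hε : 0 < ε) (hεω : ε < ω)
    (hτ₁pos : 0 < τ₁) (hτ₁₂ : τ₁ ≤ τ₂)
    (Δ₁ Δ₂ : ℝ → ℝ) (u₀ : ℝ → ℝ → ℝ)
    (hΔ₁nonneg : ∀ T, 0 ≤ Δ₁ T)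
    (hΔ₁zero : ∀ T, Δ₁ T = 0 ↔ τ₁ ≤ T)
    (hΔ₂nonneg : ∀ T, 0 ≤ Δ₂ T)
    (hΔ₂zero : ∀ T, Δ₂ T = 0 ↔ τ₂ ≤ T)
    (hbd : ∀ T, 0 ≤ T → T ≤ τ₂ → ∀ x ∈ Set.Icc ε ω,
      Δ₁ T ≤ u₀ T x ∧ u₀ T x ≤ Δ₂ T)
    (hzero : ∀ T, τ₂ < T → ∀ x ∈ Set.Icc ε ω, u₀ T x = 0) :
    τ₁ ≤ sInf {T : ℝ | 0 < T ∧ ∀ x ∈ Set.Icc ε ω, u₀ T x = 0} ∧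
    sInf {T : ℝ | 0 < T ∧ ∀ x ∈ Set.Icc ε ω, u₀ T x = 0} ≤ τ₂ :=
  stmt17_general ε ω τ₁ τ₂ hεω hτ₁pos hτ₁₂ Δ₁ Δ₂ u₀ hΔ₁nonneg hΔ₁zero hbd hzero
end
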